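/- Let M be an MRTA instance whose cost function c is metric and injective on E, and let (W, a) be the output of the SSI auction on M. Then there exists a plan 𝒫 of M such that (i) the vertex set of each robot-route in 𝒫 equals the vertex set of the connected component of the auction forest (R ∪ T, {w_1,…,w_{|T|}}) containing its starting robot, and (ii) C(𝒫) ≤ 2 · C(MinSum(M)). -/

import Mathlib

/-!
Round `k` of the auction is won by an edge `{s, t}`; the plan inserts `t` into the route through
`s`, directly after `s`. By the triangle inequality each insertion costs at most `2 c(s, t)`, so
the plan costs at most twice the auction, and its routes are the trees of the auction forest.

Conversely, in any plan `Q` every task `t` is entered from its predecessor `p t`, and these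
edges form a forest rooted at the robots. An edge `{p t, t}` is a candidate in exactly the rounds
lying between the assignment times of its ends, so it costs at least the winning edge of each of
them. These rounds form an interval, and counting the edges of the forest inside a window of
rounds gives Hall's condition, so the edges can be matched to distinct rounds: the auction costs
at most `C(Q)`.
-/

open Finset

/-- The (traversal) cost of a route given as a list of vertices: the sum of the
costs of consecutive pairs. -/
def pathCost {α : Type*} (c : α → α → ℝ) (l : List α) : ℝ :=
  ((l.zip l.tail).map fun p => c p.1 p.2).sum

/-- The set of tasks assigned in the bid rounds with (0-based) index `< k`. -/
def auctionAssigned {V : Type*} [DecidableEq V] {n : ℕ} (w : Fin n → V × V) (k : ℕ) :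
    Finset V :=
  (Finset.univ.filter fun i : Fin n => (i : ℕ) < k).image fun i => (w i).2

/-- `w` is the output of the SSI auction for the instance `(R, T, c)`. -/
def IsAuction {V : Type*} [DecidableEq V] (R T : Finset V) (c : V → V → ℝ) {n : ℕ}
    (w : Fin n → V × V) : Prop :=
  ∀ k : Fin n,
    (w k).1 ∈ R ∪ auctionAssigned w (k : ℕ) ∧
    (w k).2 ∈ T \ auctionAssigned w (k : ℕ) ∧
    ∀ s ∈ R ∪ auctionAssigned w (k : ℕ), ∀ t ∈ T \ auctionAssigned w (k : ℕ),
      (s, t) ≠ w k → c (w k).1 (w k).2 < c s t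

/-- `c` is injective on the edge set of the complete graph. -/
def InjOnEdges {V : Type*} (c : V → V → ℝ) : Prop :=
  ∀ x y x' y' : V, x ≠ y → x' ≠ y' → c x y = c x' y' →
    (x = x' ∧ y = y') ∨ (x = y' ∧ y = x')

/-- The graph whose edges are the winning edges of the auction. -/
def auctionGraph {V : Type*} {n : ℕ} (w : Fin n → V × V) : SimpleGraph V :=
  SimpleGraph.fromRel fun x y => ∃ k, w k = (x, y)

/-- `P` is a plan: for each robot `r ∈ R`, `P r` is a robot-route starting at `r`
whose remaining vertices are tasks, the routes have no repeated vertices, and the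
vertex sets of the routes partition `R ∪ T`. -/
def IsPlan {V : Type*} (R T : Finset V) (P : V → List V) : Prop :=
  (∀ r ∈ R, ∃ rest : List V, P r = r :: rest ∧ ∀ v ∈ rest, v ∈ T) ∧
  (∀ r ∈ R, (P r).Nodup) ∧
  (∀ v : V, ∃! r : V, r ∈ R ∧ v ∈ P r)


section PathCost

variable {α : Type*} {c : α → α → ℝ}

@[simp] lemma pathCost_nil : pathCost c [] = 0 := rfl

@[simp] lemma pathCost_singleton (a : α) : pathCost c [a] = 0 := rfl

@[simp] lemma pathCost_cons_cons (a b : α) (l : List α) :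
    pathCost c (a :: b :: l) = c a b + pathCost c (b :: l) := by
  simp [pathCost]

lemma List.exists_mem_zip_tail {l : List α} {y : α} (hy : y ∈ l.tail) :
    ∃ x, (x, y) ∈ l.zip l.tail := by
  induction l with
  | nil => simp at hy
  | cons a l ih =>
    cases l with
    | nil => simp at hy
    | cons b l =>
      rcases List.mem_cons.mp hy with rfl | hy
      · exact ⟨a, by simp⟩
      · obtain ⟨x, hx⟩ := ih hy
        exact ⟨x, List.mem_cons_of_mem _ hx⟩

lemma List.idxOf_lt_idxOf_of_mem_zip_tail [DecidableEq α] {l : List α} (hl : l.Nodup)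
    {x y : α} (h : (x, y) ∈ l.zip l.tail) : l.idxOf x < l.idxOf y := by
  induction l with
  | nil => simp at h
  | cons a l ih =>
    cases l with
    | nil => simp at h
    | cons b l =>
      obtain ⟨ha, hl'⟩ := List.nodup_cons.mp hl
      rcases List.mem_cons.mp h with h | h
      · obtain ⟨rfl, rfl⟩ := Prod.mk.inj h
        have hab : x ≠ y := fun h => ha (h ▸ List.mem_cons_self)
        rw [List.idxOf_cons_self, List.idxOf_cons_ne _ hab]
        exact Nat.succ_pos _
      · have hx := (List.of_mem_zip h).1
        have hy := List.mem_cons_of_mem b (List.of_mem_zip h).2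
        rw [List.idxOf_cons_ne _ (ne_of_mem_of_not_mem hx ha).symm,
          List.idxOf_cons_ne _ (ne_of_mem_of_not_mem hy ha).symm]
        exact Nat.succ_lt_succ (ih hl' h)

lemma sum_le_pathCost [DecidableEq α] (hc : ∀ x y, 0 ≤ c x y) {l : List α} (hl : l.Nodup)
    (s : Finset α) (p : α → α) (hp : ∀ t ∈ s, (p t, t) ∈ l.zip l.tail) :
    ∑ t ∈ s, c (p t) t ≤ pathCost c l := by
  have hzip : (l.zip l.tail).Nodup := by
    refine List.Nodup.of_map Prod.snd ?_
    rw [List.map_snd_zip (by simp)]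
    exact hl.sublist (List.tail_sublist l)
  calc ∑ t ∈ s, c (p t) t
      = ∑ e ∈ s.image (fun t => (p t, t)), c e.1 e.2 := by
        rw [Finset.sum_image fun _ _ _ _ h => (Prod.mk.inj h).2]
    _ ≤ ∑ e ∈ (l.zip l.tail).toFinset, c e.1 e.2 :=
        Finset.sum_le_sum_of_subset_of_nonneg
          (fun e he => by
            obtain ⟨t, ht, rfl⟩ := Finset.mem_image.mp he
            exact List.mem_toFinset.mpr (hp t ht))
          (fun e _ _ => hc _ _)
    _ = pathCost c l := List.sum_toFinset _ hzip

end PathCost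

section InsertAfter

variable {α : Type*} [DecidableEq α]

def List.insertAfter (s t : α) : List α → List α
  | [] => []
  | x :: l => if x = s then x :: t :: l else x :: insertAfter s t l

namespace List

variable {s t : α}

lemma insertAfter_cons_eq (x : α) (l : List α) :
    ∃ l', insertAfter s t (x :: l) = x :: l' := by
  unfold insertAfter
  split_ifs
  exacts [⟨_, rfl⟩, ⟨_, rfl⟩]

lemma insertAfter_of_notMem {l : List α} (h : s ∉ l) : insertAfter s t l = l := by
  induction l with
  | nil => rfl
  | cons x l ih =>
    rw [List.mem_cons, not_or] at h
    obtain ⟨hx, hl⟩ := h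
    simp [insertAfter, Ne.symm hx, ih hl]

lemma mem_insertAfter {l : List α} {v : α} :
    v ∈ insertAfter s t l ↔ v ∈ l ∨ (v = t ∧ s ∈ l) := by
  induction l with
  | nil => simp [insertAfter]
  | cons x l ih =>
    unfold insertAfter
    split_ifs with hx
    · subst hx; simp; tauto
    · simp [ih, Ne.symm hx]; tauto

lemma Nodup.insertAfter {l : List α} (hl : l.Nodup) (ht : t ∉ l) :
    (insertAfter s t l).Nodup := by
  induction l with
  | nil => simp [List.insertAfter]
  | cons x l ih =>
    obtain ⟨hx, hl'⟩ := List.nodup_cons.mp hl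
    rw [List.mem_cons, not_or] at ht
    obtain ⟨htx, htl⟩ := ht
    unfold List.insertAfter
    split_ifs
    · simp [hx, hl', htl, Ne.symm htx]
    · refine List.nodup_cons.mpr ⟨fun h => ?_, ih hl' htl⟩
      rcases mem_insertAfter.mp h with h | ⟨rfl, -⟩
      exacts [hx h, htx rfl]

end List

/-- The step `s → y` becomes `s → t → y`, and `c t y ≤ c t s + c s y`. -/
lemma pathCost_insertAfter_le {s t : α} {c : α → α → ℝ} (hc : ∀ x y, 0 ≤ c x y)
    (htri : ∀ x y z, c x z ≤ c x y + c y z) (l : List α) :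
    pathCost c (l.insertAfter s t) ≤ pathCost c l + (c s t + c t s) := by
  induction l with
  | nil => simpa [List.insertAfter] using add_nonneg (hc s t) (hc t s)
  | cons x l ih =>
    unfold List.insertAfter
    split_ifs with hx
    · subst hx
      cases l with
      | nil => simpa using hc t x
      | cons y l => simp only [pathCost_cons_cons]; linarith [htri t x y]
    · cases l with
      | nil => simpa [List.insertAfter] using add_nonneg (hc s t) (hc t s)
      | cons y l =>
        obtain ⟨l', hl'⟩ := List.insertAfter_cons_eq (s := s) (t := t) y l
        rw [hl'] at ih ⊢
        simp only [pathCost_cons_cons]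
        linarith

end InsertAfter

section Auction

variable {V : Type*} [DecidableEq V] {R T : Finset V} {c : V → V → ℝ} {n : ℕ}

lemma mem_auctionAssigned {w : Fin n → V × V} {k : ℕ} {v : V} :
    v ∈ auctionAssigned w k ↔ ∃ i : Fin n, (i : ℕ) < k ∧ (w i).2 = v := by
  simp [auctionAssigned]

lemma auctionAssigned_succ (w : Fin n → V × V) (k : Fin n) :
    auctionAssigned w (k + 1) = insert (w k).2 (auctionAssigned w k) := by
  ext v
  simp only [mem_auctionAssigned, Finset.mem_insert]
  constructor
  · rintro ⟨i, hi, rfl⟩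
    rcases Nat.lt_succ_iff_lt_or_eq.mp hi with hi | hi
    · exact Or.inr ⟨i, hi, rfl⟩
    · exact Or.inl (by rw [Fin.ext hi])
  · rintro (rfl | ⟨i, hi, rfl⟩)
    exacts [⟨k, Nat.lt_add_one _, rfl⟩, ⟨i, hi.trans (Nat.lt_add_one _), rfl⟩]

/-- A vertex assigned in round `k` gets time `k + 1`, so that the robots, never assigned, get
time `0` and come before every task. -/
noncomputable def auctionTime (w : Fin n → V × V) (v : V) : ℕ :=
  if h : ∃ k, (w k).2 = v then h.choose + 1 else 0

namespace IsAuction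

variable {w : Fin #T → V × V}

lemma fst_mem (hw : IsAuction R T c w) (k : Fin #T) :
    (w k).1 ∈ R ∪ auctionAssigned w k :=
  (hw k).1

lemma snd_mem (hw : IsAuction R T c w) (k : Fin #T) : (w k).2 ∈ T :=
  (Finset.mem_sdiff.mp (hw k).2.1).1

lemma snd_notMem_auctionAssigned (hw : IsAuction R T c w) (k : Fin #T) :
    (w k).2 ∉ auctionAssigned w k :=
  (Finset.mem_sdiff.mp (hw k).2.1).2

lemma snd_injective (hw : IsAuction R T c w) : Function.Injective fun k => (w k).2 := by
  intro i j hij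
  by_contra hne
  rcases Fin.lt_or_lt_of_ne hne with h | h
  · exact hw.snd_notMem_auctionAssigned j (mem_auctionAssigned.mpr ⟨i, h, hij⟩)
  · exact hw.snd_notMem_auctionAssigned i (mem_auctionAssigned.mpr ⟨j, h, hij.symm⟩)

lemma exists_snd_eq (hw : IsAuction R T c w) {t : V} (ht : t ∈ T) : ∃ k, (w k).2 = t := by
  obtain ⟨k, -, hk⟩ := Finset.surj_on_of_inj_on_of_card_le (s := Finset.univ)
    (fun k _ => (w k).2) (fun k _ => hw.snd_mem k)
    (fun _ _ _ _ h => hw.snd_injective h) (by simp) t ht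
  exact ⟨k, hk.symm⟩

lemma auctionAssigned_card (hw : IsAuction R T c w) : auctionAssigned w #T = T := by
  ext t
  refine ⟨fun ht => ?_, fun ht => ?_⟩
  · obtain ⟨i, -, rfl⟩ := mem_auctionAssigned.mp ht
    exact hw.snd_mem i
  · obtain ⟨k, rfl⟩ := hw.exists_snd_eq ht
    exact mem_auctionAssigned.mpr ⟨k, k.2, rfl⟩

lemma winner_cost_le (hw : IsAuction R T c w) (k : Fin #T) {x y : V}
    (hx : x ∈ R ∪ auctionAssigned w k) (hy : y ∈ T \ auctionAssigned w k) :
    c (w k).1 (w k).2 ≤ c x y := by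
  by_cases h : (x, y) = w k
  · rw [← h]
  · exact ((hw k).2.2 x hx y hy h).le

lemma auctionTime_snd (hw : IsAuction R T c w) (k : Fin #T) :
    auctionTime w (w k).2 = k + 1 := by
  have h : ∃ i, (w i).2 = (w k).2 := ⟨k, rfl⟩
  rw [auctionTime, dif_pos h, hw.snd_injective h.choose_spec]

lemma auctionTime_of_notMem (hw : IsAuction R T c w) {v : V} (hv : v ∉ T) :
    auctionTime w v = 0 := by
  rw [auctionTime, dif_neg]
  rintro ⟨k, rfl⟩
  exact hv (hw.snd_mem k)

lemma auctionTime_pos (hw : IsAuction R T c w) {t : V} (ht : t ∈ T) : 0 < auctionTime w t := by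
  obtain ⟨k, rfl⟩ := hw.exists_snd_eq ht
  simp [hw.auctionTime_snd]

lemma auctionTime_le (hw : IsAuction R T c w) (v : V) : auctionTime w v ≤ #T := by
  by_cases hv : v ∈ T
  · obtain ⟨k, rfl⟩ := hw.exists_snd_eq hv
    simp [hw.auctionTime_snd]
  · simp [hw.auctionTime_of_notMem hv]

lemma injOn_auctionTime (hw : IsAuction R T c w) : Set.InjOn (auctionTime w) T := by
  intro x hx y hy h
  obtain ⟨i, rfl⟩ := hw.exists_snd_eq hx
  obtain ⟨j, rfl⟩ := hw.exists_snd_eq hy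
  rw [hw.auctionTime_snd, hw.auctionTime_snd, add_left_inj, Fin.val_inj] at h
  rw [h]

lemma mem_union_auctionAssigned_iff (hw : IsAuction R T c w) (hdisj : Disjoint R T)
    {v : V} (hv : v ∈ R ∪ T) (k : ℕ) :
    v ∈ R ∪ auctionAssigned w k ↔ auctionTime w v ≤ k := by
  rcases Finset.mem_union.mp hv with hR | hT
  · simp [hR, hw.auctionTime_of_notMem (Finset.disjoint_left.mp hdisj hR)]
  · obtain ⟨i, rfl⟩ := hw.exists_snd_eq hT
    rw [Finset.mem_union, hw.auctionTime_snd, mem_auctionAssigned,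
      or_iff_right (Finset.disjoint_right.mp hdisj hT)]
    constructor
    · rintro ⟨j, hj, hji⟩
      rw [hw.snd_injective hji] at hj
      exact hj
    · exact fun hi => ⟨i, hi, rfl⟩

end IsAuction

end Auction

section Route

variable {V : Type*} [DecidableEq V] {R T : Finset V} {c : V → V → ℝ} {n : ℕ}

def auctionRoute (w : Fin n → V × V) (r : V) : ℕ → List V
  | 0 => [r]
  | k + 1 =>
    if h : k < n then (auctionRoute w r k).insertAfter (w ⟨k, h⟩).1 (w ⟨k, h⟩).2
    else auctionRoute w r k

lemma auctionRoute_succ (w : Fin n → V × V) (r : V) (k : Fin n) :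
    auctionRoute w r (k + 1) = (auctionRoute w r k).insertAfter (w k).1 (w k).2 := by
  simp [auctionRoute]

lemma auctionRoute_eq_cons (w : Fin n → V × V) (r : V) (k : ℕ) :
    ∃ rest, auctionRoute w r k = r :: rest := by
  induction k with
  | zero => exact ⟨[], rfl⟩
  | succ k ih =>
    obtain ⟨rest, hrest⟩ := ih
    unfold auctionRoute
    split_ifs
    · rw [hrest]
      exact List.insertAfter_cons_eq r rest
    · exact ⟨rest, hrest⟩

lemma mem_auctionRoute_succ {w : Fin n → V × V} {r v : V} {k : Fin n} :
    v ∈ auctionRoute w r (k + 1) ↔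
      v ∈ auctionRoute w r k ∨ (v = (w k).2 ∧ (w k).1 ∈ auctionRoute w r k) := by
  rw [auctionRoute_succ, List.mem_insertAfter]

lemma auctionRoute_subset (w : Fin n → V × V) (r : V) {k m : ℕ} (hkm : k ≤ m) :
    auctionRoute w r k ⊆ auctionRoute w r m := by
  induction m, hkm using Nat.le_induction with
  | base => exact List.Subset.refl _
  | succ m _ ih =>
    intro v hv
    unfold auctionRoute
    split_ifs
    · exact List.mem_insertAfter.mpr (Or.inl (ih hv))
    · exact ih hv

lemma eq_or_mem_auctionAssigned_of_mem_auctionRoute {w : Fin n → V × V} {r v : V} {k : ℕ}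
    (hv : v ∈ auctionRoute w r k) : v = r ∨ v ∈ auctionAssigned w k := by
  induction k generalizing v with
  | zero => simp_all [auctionRoute]
  | succ k ih =>
    by_cases hk : k < n
    · rw [show k = ((⟨k, hk⟩ : Fin n) : ℕ) from rfl, mem_auctionRoute_succ] at hv
      rw [show k = ((⟨k, hk⟩ : Fin n) : ℕ) from rfl, auctionAssigned_succ, Finset.mem_insert]
      rcases hv with hv | ⟨rfl, -⟩
      · exact (ih hv).imp_right Or.inr
      · exact Or.inr (Or.inl rfl)
    · simp only [auctionRoute, dif_neg hk] at hv
      refine (ih hv).imp_right fun hv => ?_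
      obtain ⟨i, hi, rfl⟩ := mem_auctionAssigned.mp hv
      exact mem_auctionAssigned.mpr ⟨i, hi.trans (Nat.lt_add_one k), rfl⟩

namespace IsAuction

variable {w : Fin #T → V × V}

lemma snd_notMem_auctionRoute (hw : IsAuction R T c w) (hdisj : Disjoint R T) {r : V}
    (hr : r ∈ R) (k : Fin #T) : (w k).2 ∉ auctionRoute w r k := fun ht => by
  rcases eq_or_mem_auctionAssigned_of_mem_auctionRoute ht with h | h
  · exact Finset.disjoint_left.mp hdisj hr (h ▸ hw.snd_mem k)
  · exact hw.snd_notMem_auctionAssigned k h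

lemma nodup_auctionRoute (hw : IsAuction R T c w) (hdisj : Disjoint R T) {r : V} (hr : r ∈ R)
    {k : ℕ} (hk : k ≤ #T) : (auctionRoute w r k).Nodup := by
  induction k with
  | zero => simp [auctionRoute]
  | succ k ih =>
    rw [show k = ((⟨k, hk⟩ : Fin #T) : ℕ) from rfl, auctionRoute_succ]
    exact (ih (by omega)).insertAfter (hw.snd_notMem_auctionRoute hdisj hr _)

lemma exists_mem_auctionRoute (hw : IsAuction R T c w) {k : ℕ} (hk : k ≤ #T) {v : V}
    (hv : v ∈ R ∪ auctionAssigned w k) : ∃ r ∈ R, v ∈ auctionRoute w r k := by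
  induction k generalizing v with
  | zero =>
    have hR : v ∈ R := by simpa [auctionAssigned] using hv
    exact ⟨v, hR, by simp [auctionRoute]⟩
  | succ k ih =>
    set i : Fin #T := ⟨k, hk⟩
    simp only [show k = (i : ℕ) from rfl, auctionAssigned_succ, mem_auctionRoute_succ,
      Finset.mem_union, Finset.mem_insert] at hv ⊢
    rcases hv with hv | rfl | hv
    · obtain ⟨r, hr, hv⟩ := ih (by omega) (Finset.mem_union_left _ hv)
      exact ⟨r, hr, Or.inl hv⟩
    · obtain ⟨r, hr, hs⟩ := ih (by omega) (hw.fst_mem i)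
      exact ⟨r, hr, Or.inr ⟨rfl, hs⟩⟩
    · obtain ⟨r, hr, hv⟩ := ih (by omega) (Finset.mem_union_right _ hv)
      exact ⟨r, hr, Or.inl hv⟩

lemma eq_of_mem_auctionRoute (hw : IsAuction R T c w) (hdisj : Disjoint R T) {k : ℕ}
    (hk : k ≤ #T) {r r' v : V} (hr : r ∈ R) (hr' : r' ∈ R) (hv : v ∈ auctionRoute w r k)
    (hv' : v ∈ auctionRoute w r' k) : r = r' := by
  induction k generalizing v with
  | zero => simp_all [auctionRoute]
  | succ k ih =>
    set i : Fin #T := ⟨k, hk⟩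
    have ih := @ih (by omega)
    rw [show k = (i : ℕ) from rfl, mem_auctionRoute_succ] at hv hv'
    rcases hv with hv | ⟨rfl, hs⟩ <;> rcases hv' with hv' | ⟨hv'', hs'⟩
    · exact ih hv hv'
    · exact absurd (hv'' ▸ hv) (hw.snd_notMem_auctionRoute hdisj hr i)
    · exact absurd hv' (hw.snd_notMem_auctionRoute hdisj hr' i)
    · exact ih hs hs'

end IsAuction

end Route

section AuctionPlan

variable {V : Type*} [DecidableEq V] {R T : Finset V} {c : V → V → ℝ} {w : Fin #T → V × V}

namespace IsAuction

lemma sum_pathCost_auctionRoute_le (hw : IsAuction R T c w) (hdisj : Disjoint R T)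
    (hc : ∀ x y, 0 ≤ c x y) (hsymm : ∀ x y, c x y = c y x)
    (htri : ∀ x y z, c x z ≤ c x y + c y z) {k : ℕ} (hk : k ≤ #T) :
    ∑ r ∈ R, pathCost c (auctionRoute w r k) ≤
      2 * ∑ i ∈ Finset.univ.filter (fun i : Fin #T => (i : ℕ) < k), c (w i).1 (w i).2 := by
  induction k with
  | zero => simp [auctionRoute]
  | succ k ih =>
    set i : Fin #T := ⟨k, hk⟩
    set s := (w i).1
    set t := (w i).2
    have hstep : ∀ r, pathCost c (auctionRoute w r (i + 1)) ≤
        pathCost c (auctionRoute w r i) + if s ∈ auctionRoute w r i then 2 * c s t else 0 := by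
      intro r
      rw [auctionRoute_succ]
      split_ifs with h
      · linarith [pathCost_insertAfter_le (s := s) (t := t) hc htri (auctionRoute w r i), hsymm t s]
      · rw [List.insertAfter_of_notMem h, add_zero]
    have hunique : #(R.filter fun r => s ∈ auctionRoute w r i) ≤ 1 :=
      Finset.card_le_one.mpr fun a ha b hb =>
        hw.eq_of_mem_auctionRoute hdisj i.2.le (Finset.mem_filter.mp ha).1
          (Finset.mem_filter.mp hb).1 (Finset.mem_filter.mp ha).2 (Finset.mem_filter.mp hb).2
    have hrounds : Finset.univ.filter (fun j : Fin #T => (j : ℕ) < k + 1) =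
        insert i (Finset.univ.filter fun j : Fin #T => (j : ℕ) < k) := by
      ext j
      simp only [Finset.mem_filter, Finset.mem_univ, true_and, Finset.mem_insert, Fin.ext_iff, i]
      omega
    calc ∑ r ∈ R, pathCost c (auctionRoute w r (k + 1))
        ≤ ∑ r ∈ R, (pathCost c (auctionRoute w r i) +
            if s ∈ auctionRoute w r i then 2 * c s t else 0) := Finset.sum_le_sum fun r _ => hstep r
      _ = ∑ r ∈ R, pathCost c (auctionRoute w r k) +
            #(R.filter fun r => s ∈ auctionRoute w r i) * (2 * c s t) := by
        rw [Finset.sum_add_distrib, ← Finset.sum_filter, Finset.sum_const, nsmul_eq_mul]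
      _ ≤ 2 * ∑ j ∈ Finset.univ.filter (fun j : Fin #T => (j : ℕ) < k), c (w j).1 (w j).2 +
            2 * c s t := by
        refine add_le_add (ih (by omega)) (mul_le_of_le_one_left ?_ (by exact_mod_cast hunique))
        linarith [hc s t]
      _ = _ := by
        rw [hrounds, Finset.sum_insert (by simp [i]), mul_add, add_comm]

lemma auctionGraph_adj (hw : IsAuction R T c w) (hdisj : Disjoint R T) (k : Fin #T) :
    (auctionGraph w).Adj (w k).1 (w k).2 := by
  refine SimpleGraph.fromRel_adj _ _ _ |>.mpr ⟨fun h => ?_, Or.inl ⟨k, rfl⟩⟩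
  rcases Finset.mem_union.mp (h ▸ hw.fst_mem k) with h | h
  · exact Finset.disjoint_left.mp hdisj h (hw.snd_mem k)
  · exact hw.snd_notMem_auctionAssigned k h

lemma reachable_of_mem_auctionRoute (hw : IsAuction R T c w) (hdisj : Disjoint R T) {r v : V}
    {k : ℕ} (hv : v ∈ auctionRoute w r k) (hk : k ≤ #T) : (auctionGraph w).Reachable r v := by
  induction k generalizing v with
  | zero => simp_all [auctionRoute]
  | succ k ih =>
    set i : Fin #T := ⟨k, hk⟩
    rw [show k = (i : ℕ) from rfl, mem_auctionRoute_succ] at hv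
    rcases hv with hv | ⟨rfl, hs⟩
    · exact ih hv (by omega)
    · exact (ih hs (by omega)).trans (hw.auctionGraph_adj hdisj i).reachable

lemma mem_auctionRoute_iff_of_adj (hw : IsAuction R T c w) (hdisj : Disjoint R T) {r : V}
    (hr : r ∈ R) {x y : V} (h : (auctionGraph w).Adj x y) :
    x ∈ auctionRoute w r #T ↔ y ∈ auctionRoute w r #T := by
  have key : ∀ k : Fin #T,
      (w k).1 ∈ auctionRoute w r #T ↔ (w k).2 ∈ auctionRoute w r #T := by
    intro k
    obtain ⟨r', hr', hs⟩ := hw.exists_mem_auctionRoute k.2.le (hw.fst_mem k)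
    have ht : (w k).2 ∈ auctionRoute w r' (k + 1) := mem_auctionRoute_succ.mpr (Or.inr ⟨rfl, hs⟩)
    replace hs := auctionRoute_subset w r' k.2.le hs
    replace ht := auctionRoute_subset w r' k.2 ht
    constructor <;> intro h
    · rwa [hw.eq_of_mem_auctionRoute hdisj le_rfl hr hr' h hs]
    · rwa [hw.eq_of_mem_auctionRoute hdisj le_rfl hr hr' h ht]
  obtain ⟨-, ⟨k, hk⟩ | ⟨k, hk⟩⟩ := (SimpleGraph.fromRel_adj _ _ _).mp h
  · simpa [hk] using key k
  · simpa [hk] using (key k).symm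

lemma mem_auctionRoute_iff_reachable (hw : IsAuction R T c w) (hdisj : Disjoint R T) {r : V}
    (hr : r ∈ R) (v : V) : v ∈ auctionRoute w r #T ↔ (auctionGraph w).Reachable r v := by
  have hwalk : ∀ {u x}, (auctionGraph w).Walk u x →
      u ∈ auctionRoute w r #T → x ∈ auctionRoute w r #T := by
    intro u x q
    induction q with
    | nil => exact id
    | cons h _ ih => exact fun hu => ih ((hw.mem_auctionRoute_iff_of_adj hdisj hr h).mp hu)
  refine ⟨fun hv => hw.reachable_of_mem_auctionRoute hdisj hv le_rfl, fun ⟨p⟩ => ?_⟩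
  exact hwalk p (auctionRoute_subset w r (Nat.zero_le _) (by simp [auctionRoute]))

lemma isPlan_auctionRoute [Fintype V] (hw : IsAuction R T c w) (hdisj : Disjoint R T)
    (hunion : R ∪ T = Finset.univ) : IsPlan R T fun r => auctionRoute w r #T := by
  refine ⟨fun r hr => ?_, fun r hr => hw.nodup_auctionRoute hdisj hr le_rfl, fun v => ?_⟩
  · obtain ⟨rest, hrest⟩ := auctionRoute_eq_cons w r #T
    refine ⟨rest, hrest, fun v hv => ?_⟩
    have hnodup := hw.nodup_auctionRoute hdisj hr le_rfl
    rw [hrest, List.nodup_cons] at hnodup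
    have hvr : v ≠ r := fun h => hnodup.1 (h ▸ hv)
    have hvT := eq_or_mem_auctionAssigned_of_mem_auctionRoute (hrest ▸ List.mem_cons_of_mem r hv)
    rwa [hw.auctionAssigned_card, or_iff_right hvr] at hvT
  · have hv : v ∈ R ∪ auctionAssigned w #T := by simp [hw.auctionAssigned_card, hunion]
    obtain ⟨r, hr, hvr⟩ := hw.exists_mem_auctionRoute le_rfl hv
    exact ⟨r, ⟨hr, hvr⟩, fun r' ⟨hr', hvr'⟩ =>
      hw.eq_of_mem_auctionRoute hdisj le_rfl hr' hr hvr' hvr⟩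

end IsAuction

end AuctionPlan

section IntervalHall

variable {ι : Type*} (s : Finset ι) (lo hi : ι → ℕ)

/-- A gap in `U` splits the intervals inside `U` into those left and those right of it, which
reduces the claim to the case where `U` is itself an interval. -/
lemma card_filter_Ico_subset_le (hlt : ∀ i ∈ s, lo i < hi i)
    (hIco : ∀ a b, #(s.filter fun i => a ≤ lo i ∧ hi i ≤ b) ≤ b - a) (U : Finset ℕ) :
    #(s.filter fun i => Finset.Ico (lo i) (hi i) ⊆ U) ≤ #U := by
  classical
  induction U using Finset.strongInduction with
  | H U ih =>
  rcases U.eq_empty_or_nonempty with rfl | hU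
  · simpa [Finset.filter_eq_empty_iff] using hlt
  set a := U.min' hU
  set b := U.max' hU
  by_cases hgap : ∃ g ∉ U, a < g ∧ g < b
  · obtain ⟨g, hgU, hag, hgb⟩ := hgap
    have hsplit : s.filter (fun i => Finset.Ico (lo i) (hi i) ⊆ U) ⊆
        s.filter (fun i => Finset.Ico (lo i) (hi i) ⊆ U.filter (· < g)) ∪
          s.filter (fun i => Finset.Ico (lo i) (hi i) ⊆ U.filter fun x => ¬x < g) := by
      intro i hi'
      obtain ⟨hs, hsub⟩ := Finset.mem_filter.mp hi'
      have hg : ¬(lo i ≤ g ∧ g < hi i) := fun h => hgU (hsub (Finset.mem_Ico.mpr h))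
      rw [Finset.mem_union, Finset.mem_filter, Finset.mem_filter]
      by_cases hhi : hi i ≤ g
      · refine Or.inl ⟨hs, fun x hx => Finset.mem_filter.mpr ⟨hsub hx, ?_⟩⟩
        exact (Finset.mem_Ico.mp hx).2.trans_le hhi
      · refine Or.inr ⟨hs, fun x hx => Finset.mem_filter.mpr ⟨hsub hx, ?_⟩⟩
        have := (Finset.mem_Ico.mp hx).1
        omega
    have hleft : U.filter (· < g) ⊂ U :=
      Finset.filter_ssubset.mpr ⟨b, U.max'_mem hU, hgb.not_gt⟩
    have hright : (U.filter fun x => ¬x < g) ⊂ U :=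
      Finset.filter_ssubset.mpr ⟨a, U.min'_mem hU, not_not.mpr hag⟩
    calc _ ≤ _ := Finset.card_le_card hsplit
      _ ≤ _ := Finset.card_union_le _ _
      _ ≤ #(U.filter (· < g)) + #(U.filter fun x => ¬x < g) :=
        add_le_add (ih _ hleft) (ih _ hright)
      _ = #U := Finset.card_filter_add_card_filter_not _
  · simp only [not_exists, not_and, not_lt] at hgap
    have hU_eq : U = Finset.Ico a (b + 1) := by
      ext x
      refine ⟨fun hx => Finset.mem_Ico.mpr ⟨U.min'_le x hx, Nat.lt_succ_of_le (U.le_max' x hx)⟩,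
        fun hx => ?_⟩
      obtain ⟨hax, hxb⟩ := Finset.mem_Ico.mp hx
      by_contra hxU
      rcases hax.eq_or_lt with rfl | hax
      · exact hxU (U.min'_mem hU)
      · exact hxU (le_antisymm (Nat.le_of_lt_succ hxb) (hgap x hxU hax) ▸ U.max'_mem hU)
    rw [hU_eq, Nat.card_Ico]
    refine le_of_eq_of_le (congrArg Finset.card (Finset.filter_congr fun i hi' => ?_))
      (hIco a (b + 1))
    exact Finset.Ico_subset_Ico_iff (hlt i hi')

lemma exists_injective_mem_Ico (hlt : ∀ i ∈ s, lo i < hi i)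
    (hIco : ∀ a b, #(s.filter fun i => a ≤ lo i ∧ hi i ≤ b) ≤ b - a) :
    ∃ f : s → ℕ, Function.Injective f ∧ ∀ i : s, f i ∈ Finset.Ico (lo i) (hi i) := by
  refine (Finset.all_card_le_biUnion_card_iff_exists_injective _).mp fun S => ?_
  calc #S ≤ #(s.filter fun i => Finset.Ico (lo i) (hi i) ⊆
        S.biUnion fun j : s => Finset.Ico (lo j) (hi j)) :=
      Finset.card_le_card_of_injOn Subtype.val
        (fun i hi' => Finset.mem_filter.mpr ⟨i.2, Finset.subset_biUnion_of_mem
          (fun j : s => Finset.Ico (lo j) (hi j)) hi'⟩)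
        Subtype.val_injective.injOn
    _ ≤ _ := card_filter_Ico_subset_le s lo hi hlt hIco _

end IntervalHall

/-- For `a > 0` both ends of every counted edge `{p t, t}` lie in `T` with `τ` in `[a, b]`, and
the `ν`-minimal such vertex is not the end `t` of any of them. -/
lemma card_filter_le_of_acyclic {V : Type*} (T : Finset V) (τ : V → ℕ) (hτ : Set.InjOn τ T)
    (hpos : ∀ t ∈ T, 0 < τ t) (hzero : ∀ v ∉ T, τ v = 0) (p : V → V) (ν : V → ℕ)
    (hν : ∀ t ∈ T, p t ∈ T → ν (p t) < ν t) (a b : ℕ) :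
    #(T.filter fun t => a ≤ min (τ (p t)) (τ t) ∧ max (τ (p t)) (τ t) ≤ b) ≤ b - a := by
  classical
  rcases Nat.eq_zero_or_pos a with rfl | ha
  · calc _ ≤ #(Finset.Icc 1 b) := by
          refine Finset.card_le_card_of_injOn τ (fun t ht => ?_) (hτ.mono fun t ht => ?_)
          · obtain ⟨hT, -, hb⟩ := Finset.mem_filter.mp ht
            exact Finset.mem_Icc.mpr ⟨hpos t hT, (le_max_right _ _).trans hb⟩
          · exact (Finset.mem_filter.mp ht).1
      _ = b - 0 := by simp
  set F := T.filter fun t => a ≤ τ t ∧ τ t ≤ b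
  have hF : #F ≤ b + 1 - a := by
    calc #F ≤ #(Finset.Icc a b) := Finset.card_le_card_of_injOn τ
          (fun t ht => Finset.mem_Icc.mpr (Finset.mem_filter.mp ht).2)
          (hτ.mono fun t ht => (Finset.mem_filter.mp ht).1)
      _ = b + 1 - a := Nat.card_Icc a b
  have hmem : ∀ t ∈ T.filter (fun t => a ≤ min (τ (p t)) (τ t) ∧ max (τ (p t)) (τ t) ≤ b),
      t ∈ F ∧ p t ∈ F := by
    intro t ht
    obtain ⟨hT, hmin, hmax⟩ := Finset.mem_filter.mp ht
    rw [le_min_iff] at hmin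
    rw [max_le_iff] at hmax
    have hpT : p t ∈ T := by
      by_contra h
      have := hzero _ h
      omega
    exact ⟨Finset.mem_filter.mpr ⟨hT, hmin.2, hmax.2⟩, Finset.mem_filter.mpr ⟨hpT, hmin.1, hmax.1⟩⟩
  rcases F.eq_empty_or_nonempty with hFe | hFne
  · have : T.filter (fun t => a ≤ min (τ (p t)) (τ t) ∧ max (τ (p t)) (τ t) ≤ b) = ∅ :=
      Finset.eq_empty_of_forall_notMem fun t ht => by simpa [hFe] using (hmem t ht).1
    rw [this, Finset.card_empty]
    exact Nat.zero_le _
  obtain ⟨t₀, ht₀, hmin⟩ := F.exists_min_image ν hFne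
  have hsub : T.filter (fun t => a ≤ min (τ (p t)) (τ t) ∧ max (τ (p t)) (τ t) ≤ b) ⊆
      F.erase t₀ := by
    intro t ht
    obtain ⟨htF, hptF⟩ := hmem t ht
    refine Finset.mem_erase.mpr ⟨fun h => ?_, htF⟩
    subst h
    exact absurd (hmin _ hptF) (not_le.mpr (hν t (Finset.mem_filter.mp htF).1
      (Finset.mem_filter.mp hptF).1))
  have := Finset.card_le_card hsub
  rw [Finset.card_erase_of_mem ht₀] at this
  omega

section LowerBound

variable {V : Type*} [DecidableEq V] {R T : Finset V} {c : V → V → ℝ}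

namespace IsAuction

variable {w : Fin #T → V × V}

/-- The hypothesis says that exactly one of `x`, `y` is a robot or assigned before round `k`,
so the edge `{x, y}` was a candidate in round `k`. -/
lemma winner_cost_le_of_mem_Ico (hw : IsAuction R T c w) (hdisj : Disjoint R T)
    (hsymm : ∀ x y, c x y = c y x) (k : Fin #T) {x y : V} (hx : x ∈ R ∪ T) (hy : y ∈ R ∪ T)
    (hk : (k : ℕ) ∈ Finset.Ico (min (auctionTime w x) (auctionTime w y))
      (max (auctionTime w x) (auctionTime w y))) :
    c (w k).1 (w k).2 ≤ c x y := by
  wlog hxy : auctionTime w x ≤ auctionTime w y generalizing x y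
  · rw [hsymm x]
    exact this hy hx (by rwa [min_comm, max_comm]) (le_of_not_ge hxy)
  rw [min_eq_left hxy, max_eq_right hxy, Finset.mem_Ico] at hk
  have hyT : y ∈ T \ auctionAssigned w k := by
    have hy' := mt (hw.mem_union_auctionAssigned_iff hdisj hy k).mp (not_le.mpr hk.2)
    rw [Finset.mem_union, not_or] at hy'
    exact Finset.mem_sdiff.mpr ⟨(Finset.mem_union.mp hy).resolve_left hy'.1, hy'.2⟩
  exact hw.winner_cost_le k ((hw.mem_union_auctionAssigned_iff hdisj hx k).mpr hk.1) hyT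

/-- By Hall's theorem the edges `{p t, t}` are matched to distinct rounds in which they are
candidates. -/
lemma sum_le_sum_of_acyclic (hw : IsAuction R T c w) (hdisj : Disjoint R T)
    (hsymm : ∀ x y, c x y = c y x) (p : V → V) (ν : V → ℕ)
    (hp : ∀ t ∈ T, p t ∈ R ∪ T ∧ (p t ∈ T → ν (p t) < ν t)) :
    ∑ k, c (w k).1 (w k).2 ≤ ∑ t ∈ T, c (p t) t := by
  let τ := auctionTime w
  have hne : ∀ t ∈ T, min (τ (p t)) (τ t) < max (τ (p t)) (τ t) := by
    intro t ht
    refine min_lt_max.mpr fun h => ?_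
    by_cases hpT : p t ∈ T
    · have hpt : p t ≠ t := fun h' => by simpa [h'] using (hp t ht).2 hpT
      exact hpt (hw.injOn_auctionTime hpT ht h)
    · have := hw.auctionTime_pos ht
      have := hw.auctionTime_of_notMem hpT
      simp only [τ] at h
      omega
  obtain ⟨f, hf, hfI⟩ := exists_injective_mem_Ico T (fun t => min (τ (p t)) (τ t))
    (fun t => max (τ (p t)) (τ t)) hne
    (card_filter_le_of_acyclic T τ hw.injOn_auctionTime (fun _ => hw.auctionTime_pos)
      (fun _ => hw.auctionTime_of_notMem) p ν fun t ht => (hp t ht).2)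
  have hflt : ∀ t, f t < #T := fun t =>
    (Finset.mem_Ico.mp (hfI t)).2.trans_le (max_le (hw.auctionTime_le _) (hw.auctionTime_le _))
  set g : T → Fin #T := fun t => ⟨f t, hflt t⟩
  have hg : Function.Bijective g :=
    (Fintype.bijective_iff_injective_and_card g).mpr
      ⟨fun a b h => hf (Fin.val_eq_of_eq h), by simp⟩
  calc ∑ k, c (w k).1 (w k).2 = ∑ t : T, c (w (g t)).1 (w (g t)).2 :=
        (Fintype.sum_bijective g hg _ _ fun _ => rfl).symm
    _ ≤ ∑ t : T, c (p t) t := Finset.sum_le_sum fun t _ =>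
        hw.winner_cost_le_of_mem_Ico hdisj hsymm (g t) (hp t t.2).1
          (Finset.mem_union_right R t.2) (hfI t)
    _ = ∑ t ∈ T, c (p t) t := Finset.sum_coe_sort T fun t => c (p t) t

end IsAuction

/-- `p t` is the predecessor of `t` on its route and `ν t` its position there. -/
lemma IsPlan.exists_acyclic {Q : V → List V} (hQ : IsPlan R T Q) (hdisj : Disjoint R T)
    (hc : ∀ x y, 0 ≤ c x y) :
    ∃ (p : V → V) (ν : V → ℕ), (∀ t ∈ T, p t ∈ R ∪ T ∧ (p t ∈ T → ν (p t) < ν t)) ∧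
      ∑ t ∈ T, c (p t) t ≤ ∑ r ∈ R, pathCost c (Q r) := by
  obtain ⟨hroute, hnodup, hpart⟩ := hQ
  choose ρ hρ using fun v => (hpart v).exists
  have hρ_eq : ∀ {v r}, r ∈ R → v ∈ Q r → ρ v = r := fun hr hv =>
    (hpart _).unique (hρ _) ⟨hr, hv⟩
  have hpred : ∀ t, ∃ x, t ∈ T → (x, t) ∈ (Q (ρ t)).zip (Q (ρ t)).tail := by
    intro t
    by_cases ht : t ∈ T
    · obtain ⟨rest, hrest, -⟩ := hroute _ (hρ t).1
      have htail : t ∈ (Q (ρ t)).tail := by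
        have := (hρ t).2
        rw [hrest, List.mem_cons] at this
        rw [hrest]
        exact this.resolve_left fun h => Finset.disjoint_left.mp hdisj (h ▸ (hρ t).1) ht
      obtain ⟨x, hx⟩ := List.exists_mem_zip_tail htail
      exact ⟨x, fun _ => hx⟩
    · exact ⟨t, fun h => absurd h ht⟩
  choose p hp using hpred
  refine ⟨p, fun t => (Q (ρ t)).idxOf t, fun t ht => ⟨?_, fun _ => ?_⟩, ?_⟩
  · obtain ⟨rest, hrest, hrestT⟩ := hroute _ (hρ t).1
    have hpt := (List.of_mem_zip (hp t ht)).1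
    rw [hrest, List.mem_cons] at hpt
    rcases hpt with h | h
    · exact Finset.mem_union_left _ (h ▸ (hρ t).1)
    · exact Finset.mem_union_right _ (hrestT _ h)
  · show (Q (ρ (p t))).idxOf (p t) < (Q (ρ t)).idxOf t
    rw [hρ_eq (hρ t).1 (List.of_mem_zip (hp t ht)).1]
    exact List.idxOf_lt_idxOf_of_mem_zip_tail (hnodup _ (hρ t).1) (hp t ht)
  · rw [← Finset.sum_fiberwise_of_maps_to (g := ρ) fun t _ => (hρ t).1]
    refine Finset.sum_le_sum fun r hr => sum_le_pathCost hc (hnodup r hr) _ p fun t ht => ?_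
    obtain ⟨htT, rfl⟩ := Finset.mem_filter.mp ht
    exact hp t htT

end LowerBound

theorem statement5_general {V : Type*} [Fintype V] [DecidableEq V] (R T : Finset V)
    (hdisj : Disjoint R T) (hunion : R ∪ T = Finset.univ)
    (c : V → V → ℝ)
    -- `c` is metric
    (hsymm : ∀ x y, c x y = c y x)
    (htri : ∀ x y z : V, c x z ≤ c x y + c y z)
    (w : Fin T.card → V × V) (hw : IsAuction R T c w) :
    ∃ P : V → List V, IsPlan R T P ∧
      -- (i) the vertex set of each robot-route is the vertex set of the connected
      -- component of the auction forest containing its starting robot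
      (∀ r ∈ R, ∀ v : V, v ∈ P r ↔ (auctionGraph w).Reachable r v) ∧
      -- (ii) the cost of the plan is at most twice the minimum cost of a plan
      (∀ Q : V → List V, IsPlan R T Q →
        ∑ r ∈ R, pathCost c (P r) ≤ 2 * ∑ r ∈ R, pathCost c (Q r)) := by
  have hc : ∀ x y, 0 ≤ c x y := fun x y => by linarith [htri x x x, htri x y x, hsymm x y]
  refine ⟨fun r => auctionRoute w r #T, hw.isPlan_auctionRoute hdisj hunion,
    fun r hr v => hw.mem_auctionRoute_iff_reachable hdisj hr v, fun Q hQ => ?_⟩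
  obtain ⟨p, ν, hp, hQcost⟩ := hQ.exists_acyclic hdisj hc
  calc ∑ r ∈ R, pathCost c (auctionRoute w r #T)
      ≤ 2 * ∑ k ∈ Finset.univ.filter (fun k : Fin #T => (k : ℕ) < #T), c (w k).1 (w k).2 :=
        hw.sum_pathCost_auctionRoute_le hdisj hc hsymm htri le_rfl
    _ = 2 * ∑ k, c (w k).1 (w k).2 := by simp
    _ ≤ 2 * ∑ t ∈ T, c (p t) t := by gcongr; exact hw.sum_le_sum_of_acyclic hdisj hsymm p ν hp
    _ ≤ 2 * ∑ r ∈ R, pathCost c (Q r) := by gcongr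

theorem statement5 {V : Type*} [Fintype V] [DecidableEq V] (R T : Finset V)
    (hdisj : Disjoint R T) (hunion : R ∪ T = Finset.univ) (hcard : 3 ≤ Fintype.card V)
    (c : V → V → ℝ)
    -- `c` is metric
    (hsymm : ∀ x y, c x y = c y x) (hpos : ∀ x y : V, x ≠ y → 0 < c x y)
    (htri : ∀ x y z : V, c x z ≤ c x y + c y z)
    (hinj : InjOnEdges c)
    (w : Fin T.card → V × V) (hw : IsAuction R T c w) :
    ∃ P : V → List V, IsPlan R T P ∧
      -- (i) the vertex set of each robot-route is the vertex set of the connected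
      -- component of the auction forest containing its starting robot
      (∀ r ∈ R, ∀ v : V, v ∈ P r ↔ (auctionGraph w).Reachable r v) ∧
      -- (ii) the cost of the plan is at most twice the minimum cost of a plan
      (∀ Q : V → List V, IsPlan R T Q →
        ∑ r ∈ R, pathCost c (P r) ≤ 2 * ∑ r ∈ R, pathCost c (Q r)) :=
  statement5_general R T hdisj hunion c hsymm htri w hw
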